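/- arXiv:1710.06211 — 5 statements merged into one kernel-verified Lean document; each statement's English description precedes it below -/
import Mathlib

section
/- Let ν be an odd positive integer and let A_{>0} ⊂ (0,π) be the union over j = 1, …, (ν+1)/2 of the intervals ((2j−2)π/(ν+1), (2j−1)π/(ν+1)). Then the measure of A_{>0} with respect to the Sato–Tate measure (2/π) sin²θ dθ on [0,π] equals 1/2. -/
/-!
On an interval `(a, b)`, `∫ sin² = (b - a) / 2 + (sin a cos a - sin b cos b) / 2`. The reflection
`θ ↦ π - θ` negates `sin θ cos θ` and permutes the left endpoints `(2j - 2)π/(ν + 1)` (together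
with `π`) as well as the right endpoints `(2j - 1)π/(ν + 1)`, so all boundary terms cancel and
the integral is `(2/π) · ½ · π/2`, the intervals having total length `π/2`.
-/

open Real Finset MeasureTheory Function

theorem setIntegral_Ioo_sin_sq {a b : ℝ} (hab : a ≤ b) :
    ∫ θ in Set.Ioo a b, sin θ ^ 2 = (b - a + sin a * cos a - sin b * cos b) / 2 := by
  rw [← integral_Ioc_eq_integral_Ioo, ← intervalIntegral.integral_of_le hab, integral_sin_sq]
  ring

theorem sum_Icc_sin_mul_cos_eq_zero {x : ℕ → ℝ} {n : ℕ}
    (hx : ∀ j ∈ Icc 1 n, x (n + 1 - j) = π - x j) :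
    ∑ j ∈ Icc 1 n, sin (x j) * cos (x j) = 0 := by
  have hreflect := sum_Ico_reflect (fun j => sin (x j) * cos (x j)) 1 (Nat.le_succ (n + 1))
  rw [show n + 1 + 1 - (n + 1) = 1 by omega, Nat.add_sub_cancel, Ico_add_one_right_eq_Icc,
    sum_congr rfl fun j hj => by rw [hx j hj, sin_pi_sub, cos_pi_sub, mul_neg],
    sum_neg_distrib] at hreflect
  linarith

section HalfSteps

variable {M : ℕ} {h : ℝ}

theorem sum_Icc_sin_mul_cos_two_mul_sub_one (hπ : 2 * M * h = π) :
    ∑ j ∈ Icc 1 M, sin ((2 * (j : ℝ) - 1) * h) * cos ((2 * (j : ℝ) - 1) * h) = 0 := by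
  refine sum_Icc_sin_mul_cos_eq_zero fun j hj => ?_
  rw [Nat.cast_sub ((mem_Icc.1 hj).2.trans (Nat.le_succ M))]
  push_cast
  linear_combination hπ

theorem sum_Icc_sin_mul_cos_two_mul_sub_two (hπ : 2 * M * h = π) :
    ∑ j ∈ Icc 1 M, sin ((2 * (j : ℝ) - 2) * h) * cos ((2 * (j : ℝ) - 2) * h) = 0 := by
  have hsym := sum_Icc_sin_mul_cos_eq_zero (x := fun j => (2 * (j : ℝ) - 2) * h) (n := M + 1)
    fun j hj => by
      rw [Nat.cast_sub ((mem_Icc.1 hj).2.trans (Nat.le_succ _))]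
      push_cast
      linear_combination hπ
  have htop : (2 * ((M + 1 : ℕ) : ℝ) - 2) * h = π := by
    push_cast
    linear_combination hπ
  rwa [sum_Icc_succ_top (by omega), htop, sin_pi, zero_mul, add_zero] at hsym

theorem pairwise_disjoint_Ioo_two_mul (hh : 0 ≤ h) :
    Pairwise (Disjoint on fun j : ℕ => Set.Ioo ((2 * (j : ℝ) - 2) * h) ((2 * j - 1) * h)) := by
  have hmono : Monotone fun j : ℕ => (2 * (j : ℝ) - 2) * h := fun i j hij => by
    dsimp only
    gcongr
  refine hmono.pairwise_disjoint_on_Ioo_succ.mono fun i j hij => hij.mono ?_ ?_ <;>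
  · refine Set.Ioo_subset_Ioo le_rfl ?_
    simp only [Order.succ_eq_add_one, Nat.cast_add, Nat.cast_one]
    nlinarith

theorem setIntegral_biUnion_Ioo_sin_sq (hπ : 2 * M * h = π) :
    ∫ θ in ⋃ j ∈ Icc 1 M, Set.Ioo ((2 * (j : ℝ) - 2) * h) ((2 * j - 1) * h), sin θ ^ 2
      = π / 4 := by
  have hh : 0 ≤ h := by nlinarith [pi_pos]
  have hcont : Continuous fun θ => sin θ ^ 2 := by fun_prop
  rw [integral_biUnion_finset _ (fun _ _ => measurableSet_Ioo)
      ((pairwise_disjoint_Ioo_two_mul hh).set_pairwise _)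
      fun _ _ => hcont.integrableOn_Icc.mono_set Set.Ioo_subset_Icc_self,
    sum_congr rfl fun j _ => setIntegral_Ioo_sin_sq (by linarith), ← sum_div,
    sum_sub_distrib, sum_add_distrib, sum_Icc_sin_mul_cos_two_mul_sub_two hπ,
    sum_Icc_sin_mul_cos_two_mul_sub_one hπ,
    sum_congr rfl fun (j : ℕ) _ => show (2 * (j : ℝ) - 1) * h - (2 * j - 2) * h = h by ring,
    sum_const, Nat.card_Icc, Nat.add_sub_cancel, nsmul_eq_mul]
  linear_combination hπ / 4

end HalfSteps

theorem stmt_4_general (ν : ℕ) (hν : Odd ν) :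
    ∫ θ in (⋃ j ∈ Finset.Icc 1 ((ν + 1) / 2),
        Set.Ioo ((2 * (j : ℝ) - 2) * Real.pi / (ν + 1))
          ((2 * (j : ℝ) - 1) * Real.pi / (ν + 1))),
      (2 / Real.pi) * Real.sin θ ^ 2 = 1 / 2 := by
  obtain ⟨k, rfl⟩ := hν
  have hhalf : (2 * k + 1 + 1) / 2 = k + 1 := by omega
  have hcast : ((2 * k + 1 : ℕ) : ℝ) + 1 = 2 * ((k + 1 : ℕ) : ℝ) := by push_cast; ring
  simp only [hhalf, hcast, mul_div_assoc]
  rw [integral_const_mul, setIntegral_biUnion_Ioo_sin_sq (by field_simp)]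
  field_simp
  norm_num

theorem stmt_4 (ν : ℕ) (hν : Odd ν) (hpos : 0 < ν) :
    ∫ θ in (⋃ j ∈ Finset.Icc 1 ((ν + 1) / 2),
        Set.Ioo ((2 * (j : ℝ) - 2) * Real.pi / (ν + 1))
          ((2 * (j : ℝ) - 1) * Real.pi / (ν + 1))),
      (2 / Real.pi) * Real.sin θ ^ 2 = 1 / 2 :=
  stmt_4_general ν hν
end

section
/- Let θ be a real number such that θ/(2π) is irrational. Then for every residue class d mod t (t a positive integer), the natural density of the set {ν ∈ ℕ : ν ≡ d (mod t) and sin(νθ) > 0} equals 1/(2t); that is, (1/x)·#{ν ≤ x : ν ≡ d (mod t), sin(νθ) > 0} → 1/(2t) as x → ∞. -/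
/-!
Write `νθ = 2π · νθ/(2π)`. Along the progression `ν = r + tk` the numbers `νθ/(2π)` mod 1 form
the orbit of `x = rθ/(2π)` under the rotation by `a = tθ/(2π)` of the circle `ℝ/ℤ`, and `a` has
infinite order. For such a rotation every nontrivial Fourier character averages to zero along the
orbit (a geometric sum with ratio `≠ 1`); as trigonometric polynomials are dense in `C(ℝ/ℤ)`, the
uniform measures on the first `N` orbit points converge weakly to Haar measure (Weyl). The set where
`sin 2πz > 0` is the open half circle, whose boundary `{0, 1/2}` is Haar-null, so by the portmanteau
theorem the proportion of `k < N` with `sin((r + tk)θ) > 0` tends to `1/2`. Since about `x/t` of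
the integers `ν ≤ x` lie in the progression, the density is `1/(2t)`.
-/

open scoped Classical

open Filter MeasureTheory Topology Finset AddCircle Real
open scoped ENNReal

section DenseSpan

variable {X : Type*} [TopologicalSpace X] [CompactSpace X] [MeasurableSpace X]
  [OpensMeasurableSpace X]

lemma ContinuousMap.integrable_of_compactSpace {E : Type*} [NormedAddCommGroup E] (f : C(X, E))
    (μ : Measure X) [IsFiniteMeasure μ] : Integrable f μ :=
  f.continuous.integrable_of_hasCompactSupport (.of_compactSpace _)

lemma lipschitzWith_one_integral_continuousMap {E : Type*} [NormedAddCommGroup E]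
    [NormedSpace ℝ E] (μ : Measure X) [IsProbabilityMeasure μ] :
    LipschitzWith 1 (fun f : C(X, E) ↦ ∫ x, f x ∂μ) := by
  refine LipschitzWith.of_dist_le_mul fun f g ↦ ?_
  rw [NNReal.coe_one, one_mul, dist_eq_norm, dist_eq_norm,
    ← integral_sub (f.integrable_of_compactSpace μ) (g.integrable_of_compactSpace μ)]
  simpa using norm_integral_le_of_norm_le_const (μ := μ)
    (.of_forall fun x ↦ (f - g).norm_coe_le_norm x)

theorem MeasureTheory.ProbabilityMeasure.tendsto_of_forall_integral_tendsto_of_dense_span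
    {𝕜 ι : Type*} [RCLike 𝕜] {L : Filter ι} {μs : ι → ProbabilityMeasure X}
    {μ : ProbabilityMeasure X} {D : Set C(X, 𝕜)}
    (hD : (Submodule.span 𝕜 D).topologicalClosure = ⊤)
    (h : ∀ f ∈ D,
      Tendsto (fun i ↦ ∫ x, f x ∂(μs i : Measure X)) L (𝓝 (∫ x, f x ∂(μ : Measure X)))) :
    Tendsto μs L (𝓝 μ) := by
  let S : Submodule 𝕜 C(X, 𝕜) :=
    { carrier :=
        {f | Tendsto (fun i ↦ ∫ x, f x ∂(μs i : Measure X)) L (𝓝 (∫ x, f x ∂(μ : Measure X)))}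
      add_mem' := fun {f g} hf hg ↦ by
        simpa only [Set.mem_ofPred_eq, ContinuousMap.add_apply,
          integral_add (f.integrable_of_compactSpace _) (g.integrable_of_compactSpace _)]
          using hf.add hg
      zero_mem' := by simp [tendsto_const_nhds]
      smul_mem' := fun c f hf ↦ by simpa [integral_const_mul] using hf.const_smul c }
  have hS : IsClosed (S : Set C(X, 𝕜)) :=
    (LipschitzWith.uniformEquicontinuous _ 1 fun i ↦ lipschitzWith_one_integral_continuousMap
      (μs i : Measure X)).equicontinuous.isClosed_setOfPred_tendsto
      (lipschitzWith_one_integral_continuousMap (μ : Measure X)).continuous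
  have hSD : ⊤ ≤ S := hD ▸ Submodule.topologicalClosure_minimal _ (Submodule.span_le.2 h) hS
  refine (ProbabilityMeasure.tendsto_iff_forall_integral_rclike_tendsto 𝕜).2 fun f ↦ ?_
  exact hSD (Submodule.mem_top (x := f.toContinuousMap))

end DenseSpan

section OrbitMeasure

variable {G : Type*} [AddMonoid G] [MeasurableSpace G]

noncomputable def orbitMeasure (x a : G) (N : ℕ) : ProbabilityMeasure G :=
  ⟨((N + 1 : ℕ) : ℝ≥0∞)⁻¹ • ∑ k ∈ range (N + 1), Measure.dirac (x + k • a),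
    ⟨by simp [ENNReal.inv_mul_cancel]⟩⟩

variable [MeasurableSingletonClass G]

lemma orbitMeasure_apply (x a : G) (N : ℕ) (s : Set G) :
    (orbitMeasure x a N : Measure G) s =
      ((N + 1 : ℕ) : ℝ≥0∞)⁻¹ * #{k ∈ range (N + 1) | x + k • a ∈ s} := by
  simp [orbitMeasure, Measure.dirac_apply, Set.indicator_apply]

lemma integral_orbitMeasure {E : Type*} [NormedAddCommGroup E] [NormedSpace ℝ E]
    [CompleteSpace E] (x a : G) (N : ℕ) (f : G → E) :
    ∫ y, f y ∂(orbitMeasure x a N : Measure G) =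
      ((N + 1 : ℕ) : ℝ)⁻¹ • ∑ k ∈ range (N + 1), f (x + k • a) := by
  rw [orbitMeasure, ProbabilityMeasure.coe_mk, integral_smul_measure,
    integral_finsetSum_measure fun k _ ↦ integrable_dirac enorm_lt_top]
  simp only [integral_dirac, ENNReal.toReal_inv, ENNReal.toReal_natCast]

end OrbitMeasure

lemma tendsto_inv_mul_geom_sum {𝕜 : Type*} [RCLike 𝕜] {z : 𝕜} (hz : ‖z‖ ≤ 1) (hz1 : z ≠ 1) :
    Tendsto (fun N : ℕ ↦ (N : 𝕜)⁻¹ * ∑ k ∈ range N, z ^ k) atTop (𝓝 0) := by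
  have hsum (N : ℕ) : ‖∑ k ∈ range N, z ^ k‖ ≤ 2 / ‖z - 1‖ := by
    rw [geom_sum_eq hz1, norm_div]
    gcongr
    calc ‖z ^ N - 1‖ ≤ ‖z‖ ^ N + 1 := by simpa using norm_sub_le (z ^ N) 1
      _ ≤ 2 := by linarith [pow_le_one₀ (norm_nonneg z) hz (n := N)]
  refine squeeze_zero_norm (fun N ↦ ?_)
    (by simpa using tendsto_inv_atTop_nhds_zero_nat.mul_const (2 / ‖z - 1‖))
  rw [norm_mul, norm_inv, RCLike.norm_natCast]
  exact mul_le_mul_of_nonneg_left (hsum N) (by positivity)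

section Weyl

variable {T : ℝ}

lemma fourier_add_nsmul (n : ℤ) (x a : AddCircle T) (k : ℕ) :
    fourier n (x + k • a) = fourier n x * fourier n a ^ k := by
  simp [fourier_apply, smul_add, smul_comm n k, toCircle_add, toCircle_nsmul]

variable [Fact (0 < T)]

lemma fourier_ne_one_of_not_isOfFinAddOrder {a : AddCircle T} (ha : ¬IsOfFinAddOrder a) {n : ℤ}
    (hn : n ≠ 0) : fourier n a ≠ 1 := by
  intro h
  refine ha (isOfFinAddOrder_iff_zsmul_eq_zero.2
    ⟨n, hn, injective_toCircle (Fact.out : 0 < T).ne' ?_⟩)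
  rw [fourier_apply] at h
  simpa [toCircle_zero] using Circle.ext h

lemma integral_fourier_haarAddCircle (n : ℤ) :
    ∫ z, fourier n z ∂(haarAddCircle : Measure (AddCircle T)) = if n = 0 then 1 else 0 := by
  simpa [fourierCoeff, fourier_zero, Pi.single_apply, eq_comm] using
    congr_fun (fourierCoeff_fourier (T := T) n) 0

lemma tendsto_integral_fourier_orbitMeasure {a : AddCircle T} (ha : ¬IsOfFinAddOrder a)
    (x : AddCircle T) (n : ℤ) :
    Tendsto (fun N ↦ ∫ y, fourier n y ∂(orbitMeasure x a N : Measure (AddCircle T))) atTop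
      (𝓝 (∫ y, fourier n y ∂(haarAddCircle : Measure (AddCircle T)))) := by
  rcases eq_or_ne n 0 with rfl | hn
  · simp
  have hz : ‖fourier n a‖ ≤ 1 := (Circle.norm_coe _).le
  have := ((tendsto_inv_mul_geom_sum hz (fourier_ne_one_of_not_isOfFinAddOrder ha hn)).comp
    (tendsto_add_atTop_nat 1)).const_mul (fourier n x)
  simp_rw [integral_orbitMeasure, integral_fourier_haarAddCircle, if_neg hn, fourier_add_nsmul]
  simpa [Function.comp_def, Complex.real_smul, Finset.mul_sum, mul_left_comm] using this

theorem tendsto_orbitMeasure_haarAddCircle {a : AddCircle T} (ha : ¬IsOfFinAddOrder a)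
    (x : AddCircle T) :
    Tendsto (orbitMeasure x a) atTop (𝓝 ⟨haarAddCircle, inferInstance⟩) :=
  ProbabilityMeasure.tendsto_of_forall_integral_tendsto_of_dense_span span_fourier_closure_eq_top
    (by rintro _ ⟨n, rfl⟩; exact tendsto_integral_fourier_orbitMeasure ha x n)

end Weyl

lemma sin_two_pi_mul_pos_iff {x : ℝ} (hx : x ∈ Set.Ioc 0 1) :
    0 < sin (2 * π * x) ↔ x < 1 / 2 := by
  obtain ⟨hx0, hx1⟩ := hx
  refine ⟨fun h ↦ ?_, fun h ↦ sin_pos_of_pos_of_lt_pi (by positivity) (by nlinarith [pi_pos])⟩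
  by_contra! hx2
  rw [← sin_sub_two_pi] at h
  exact h.not_ge (sin_nonpos_of_nonpos_of_neg_pi_le (by nlinarith [pi_pos]) (by nlinarith [pi_pos]))

namespace UnitAddCircle

lemma im_toCircle_coe (x : ℝ) : (toCircle (x : UnitAddCircle) : ℂ).im = sin (2 * π * x) := by
  rw [toCircle_apply_mk, Circle.coe_exp, Complex.exp_ofReal_mul_I_im, div_one]

lemma continuous_im_toCircle : Continuous fun z : UnitAddCircle ↦ (toCircle z : ℂ).im :=
  Complex.continuous_im.comp (continuous_subtype_val.comp continuous_toCircle)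

lemma haarAddCircle_eq_volume : (haarAddCircle : Measure UnitAddCircle) = volume := by
  simp [volume_eq_smul_haarAddCircle]

def upperHalf : Set UnitAddCircle := {z | 0 < (toCircle z : ℂ).im}

lemma haarAddCircle_upperHalf : (haarAddCircle : Measure UnitAddCircle) upperHalf = 1 / 2 := by
  have hU : MeasurableSet upperHalf :=
    (isOpen_lt continuous_const continuous_im_toCircle).measurableSet
  have hpre : QuotientAddGroup.mk ⁻¹' upperHalf ∩ Set.Ioc 0 (0 + 1) = Set.Ioo (0 : ℝ) (1 / 2) := by
    ext x
    simp only [upperHalf, Set.mem_inter_iff, Set.mem_preimage, Set.mem_ofPred_eq, zero_add,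
      im_toCircle_coe]
    constructor
    · rintro ⟨h, hx⟩
      exact ⟨hx.1, (sin_two_pi_mul_pos_iff hx).1 h⟩
    · rintro ⟨hx0, hx2⟩
      have hx : x ∈ Set.Ioc 0 1 := ⟨hx0, by linarith⟩
      exact ⟨(sin_two_pi_mul_pos_iff hx).2 hx2, hx⟩
  rw [haarAddCircle_eq_volume, add_projection_respects_measure 1 0 hU, hpre, Real.volume_Ioo,
    sub_zero, ENNReal.ofReal_div_of_pos two_pos]
  simp

lemma haarAddCircle_frontier_upperHalf :
    (haarAddCircle : Measure UnitAddCircle) (frontier upperHalf) = 0 := by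
  have hS : MeasurableSet {z : UnitAddCircle | 0 = (toCircle z : ℂ).im} :=
    (isClosed_eq continuous_const continuous_im_toCircle).measurableSet
  refine measure_mono_null (frontier_lt_subset_eq continuous_const continuous_im_toCircle) ?_
  rw [haarAddCircle_eq_volume, add_projection_respects_measure 1 0 hS]
  refine measure_mono_null Set.inter_subset_left <|
    measure_mono_null ?_ ((Set.countable_range fun n : ℤ ↦ (n / 2 : ℝ)).measure_zero _)
  intro x hx
  simp only [Set.mem_preimage, Set.mem_ofPred_eq, im_toCircle_coe] at hx
  obtain ⟨n, hn⟩ := Real.sin_eq_zero_iff.1 hx.symm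
  exact ⟨n, by nlinarith [pi_pos]⟩

end UnitAddCircle

open UnitAddCircle in
theorem tendsto_card_sin_add_mul_pos_div {α : ℝ} (hα : Irrational (α / (2 * π))) (c : ℝ) :
    Tendsto (fun N : ℕ ↦ (#{k ∈ range N | 0 < sin (c + (k : ℕ) * α)} : ℝ) / N) atTop
      (𝓝 (1 / 2)) := by
  set x : UnitAddCircle := ↑(c / (2 * π))
  set a : UnitAddCircle := ↑(α / (2 * π))
  have ha : ¬IsOfFinAddOrder a :=
    not_isOfFinAddOrder_iff_forall_rat_ne_div.2 fun q h ↦ hα ⟨q, by simpa using h⟩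
  have hmem (k : ℕ) : x + k • a ∈ upperHalf ↔ 0 < sin (c + k * α) := by
    rw [← AddCircle.coe_nsmul, ← AddCircle.coe_add, upperHalf, Set.mem_ofPred_eq, im_toCircle_coe,
      nsmul_eq_mul]
    field_simp
  have key := ProbabilityMeasure.tendsto_measure_of_null_frontier_of_tendsto'
    (tendsto_orbitMeasure_haarAddCircle ha x) haarAddCircle_frontier_upperHalf
  rw [← tendsto_add_atTop_iff_nat 1]
  have := (ENNReal.tendsto_toReal (by simp [haarAddCircle_upperHalf])).comp key
  simp only [Function.comp_def, orbitMeasure_apply, ENNReal.toReal_mul, ENNReal.toReal_inv,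
    ENNReal.toReal_natCast, hmem, ProbabilityMeasure.coe_mk, haarAddCircle_upperHalf] at this
  simpa [div_eq_inv_mul] using this

section ArithmeticProgression

variable {t : ℕ}

lemma tendsto_natCast_sub_div_add_one_div (ht : 0 < t) (r : ℕ) :
    Tendsto (fun x : ℕ ↦ (((x - r) / t + 1 : ℕ) : ℝ) / x) atTop (𝓝 (1 / t)) := by
  rw [tendsto_iff_norm_sub_tendsto_zero]
  refine squeeze_zero_norm' ?_ (tendsto_const_div_atTop_nhds_zero_nat (r + 1 : ℝ))
  filter_upwards [eventually_ge_atTop r, eventually_gt_atTop 0] with x hrx hx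
  obtain ⟨q, m, hm, rfl⟩ : ∃ q m, m < t ∧ x = t * q + m + r :=
    ⟨(x - r) / t, (x - r) % t, Nat.mod_lt _ ht, by have := Nat.div_add_mod (x - r) t; omega⟩
  have hq : (t * q + m + r - r) / t = q := by
    rw [Nat.add_sub_cancel, Nat.add_comm, Nat.add_mul_div_left _ _ ht, Nat.div_eq_of_lt hm,
      zero_add]
  rw [hq]
  have hm' : (m : ℝ) < t := by exact_mod_cast hm
  have hx' : (0 : ℝ) < ((t * q + m + r : ℕ) : ℝ) := by exact_mod_cast hx
  have ht' : (1 : ℝ) ≤ t := by exact_mod_cast ht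
  have hxt : (0 : ℝ) < ((t * q + m + r : ℕ) : ℝ) * t := by positivity
  rw [norm_norm, Real.norm_eq_abs, div_sub_div _ _ hx'.ne' (by positivity), abs_div,
    abs_of_pos hxt, div_le_div_iff₀ hxt hx']
  have hnum : |((q + 1 : ℕ) : ℝ) * t - ((t * q + m + r : ℕ) : ℝ) * 1| ≤ (r + 1) * t := by
    push_cast
    rw [abs_le]
    constructor <;> nlinarith [Nat.cast_nonneg (α := ℝ) m, Nat.cast_nonneg (α := ℝ) r]
  nlinarith

lemma card_filter_mod_eq_and {P : ℕ → Prop} {r x : ℕ} (ht : 0 < t) (hr : r < t) (hrx : r ≤ x) :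
    #{ν ∈ range (x + 1) | ν % t = r ∧ P ν} = #{k ∈ range ((x - r) / t + 1) | P (r + t * k)} := by
  have hinj : Function.Injective (r + t * ·) := fun k l h ↦ by simpa [ht.ne'] using h
  conv_rhs => rw [← card_image_of_injective _ hinj]
  congr 1
  ext ν
  simp only [mem_filter, mem_range, mem_image, Nat.lt_succ_iff, Nat.le_div_iff_mul_le ht]
  constructor
  · rintro ⟨hνx, hνr, hP⟩
    have hν : r + t * (ν / t) = ν := hνr ▸ Nat.mod_add_div ν t
    refine ⟨ν / t, ⟨?_, hν.symm ▸ hP⟩, hν⟩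
    rw [Nat.mul_comm]
    omega
  · rintro ⟨k, ⟨hk, hP⟩, rfl⟩
    refine ⟨?_, ?_, hP⟩
    · rw [Nat.mul_comm] at hk
      omega
    · rw [Nat.add_mul_mod_self_left, Nat.mod_eq_of_lt hr]

theorem tendsto_card_filter_mod_eq_and_div {P : ℕ → Prop} {r : ℕ} (ht : 0 < t) (hr : r < t)
    {δ : ℝ} (h : Tendsto (fun N : ℕ ↦ (#{k ∈ range N | P (r + t * k)} : ℝ) / N) atTop (𝓝 δ)) :
    Tendsto (fun x : ℕ ↦ (#{ν ∈ range (x + 1) | ν % t = r ∧ P ν} : ℝ) / x) atTop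
      (𝓝 (δ / t)) := by
  have hK : Tendsto (fun x ↦ (x - r) / t + 1) atTop atTop :=
    (tendsto_add_atTop_nat 1).comp
      ((Nat.tendsto_div_const_atTop ht.ne').comp (tendsto_sub_atTop_nat r))
  have := (h.comp hK).mul (tendsto_natCast_sub_div_add_one_div ht r)
  rw [mul_one_div] at this
  refine this.congr' ?_
  filter_upwards [eventually_ge_atTop r] with x hrx
  rw [Function.comp_apply, card_filter_mod_eq_and ht hr hrx, div_mul_div_cancel₀ (by positivity)]

end ArithmeticProgression

theorem stmt_8 (θ : ℝ) (hirr : Irrational (θ / (2 * Real.pi)))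
    (t : ℕ) (ht : 0 < t) (d : ℕ) :
    Filter.Tendsto (fun x : ℕ =>
        (((Finset.range (x + 1)).filter
            (fun ν => ν % t = d % t ∧ 0 < Real.sin (ν * θ))).card : ℝ) / (x : ℝ))
      Filter.atTop (nhds (1 / (2 * (t : ℝ)))) := by
  have hα : Irrational (t * θ / (2 * π)) := by
    simpa only [mul_div_assoc] using hirr.natCast_mul ht.ne'
  have hsin (k : ℕ) : ((d % t + t * k : ℕ) : ℝ) * θ = (d % t : ℕ) * θ + k * (t * θ) := by
    push_cast
    ring
  have hdensity := tendsto_card_sin_add_mul_pos_div hα ((d % t : ℕ) * θ)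
  simp only [← hsin] at hdensity
  simpa only [div_div] using tendsto_card_filter_mod_eq_and_div
    (P := fun ν : ℕ ↦ 0 < sin (ν * θ)) ht (Nat.mod_lt d ht) hdensity
end

section
/- Let λ, w, ζ be complex numbers with |ζ| = 1, λ/ζ real, and suppose the polynomial 1 − λX + ζ²w²X² factors as (1 − αX)(1 − βX) with |α| = |β| = |w| and w real positive. If moreover α/ζ is real, then λ = ±2wζ. -/
/-!
Since `|ζ| = 1` and `α / ζ` is real of modulus `|α| = w`, the root is `α = ±wζ`. Then
`α² = ζ²w² = αβ`, so `β = α` and `λ = α + β = ±2wζ`.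
-/

namespace Complex

lemma eq_norm_or_eq_neg_norm_of_im_eq_zero {z : ℂ} (hz : z.im = 0) :
    z = ‖z‖ ∨ z = -‖z‖ := by
  have hz_re : z = (z.re : ℂ) := ext rfl (by simp [hz])
  rw [hz_re, norm_real, Real.norm_eq_abs]
  rcases abs_choice z.re with h | h <;> rw [h]
  · exact .inl rfl
  · exact .inr (by push_cast; ring)

lemma eq_norm_of_im_eq_zero_of_re_pos {w : ℂ} (him : w.im = 0) (hre : 0 < w.re) :
    w = ‖w‖ := by
  rcases eq_norm_or_eq_neg_norm_of_im_eq_zero him with h | h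
  · exact h
  · have : w.re = -‖w‖ := by simpa using congrArg re h
    linarith [norm_nonneg w]

lemma eq_norm_mul_or_eq_neg_norm_mul_of_im_div_eq_zero {α ζ : ℂ} (hζ : ‖ζ‖ = 1)
    (hα : (α / ζ).im = 0) : α = ‖α‖ * ζ ∨ α = -(‖α‖ * ζ) := by
  have hζ0 : ζ ≠ 0 := norm_ne_zero_iff.mp (by simp [hζ])
  have hnorm : ‖α / ζ‖ = ‖α‖ := by rw [norm_div, hζ, div_one]
  rcases eq_norm_or_eq_neg_norm_of_im_eq_zero hα with h | h <;>
    rw [hnorm, div_eq_iff hζ0] at h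
  · exact .inl h
  · exact .inr (by linear_combination h)

end Complex

theorem stmt_13_general (lam w ζ α β : ℂ) (hζ : ‖ζ‖ = 1)
    (hwreal : w.im = 0) (hwpos : 0 < w.re)
    (hsum : α + β = lam) (hprod : α * β = ζ ^ 2 * w ^ 2)
    (hαabs : ‖α‖ = ‖w‖)
    (hαreal : (α / ζ).im = 0) :
    lam = 2 * w * ζ ∨ lam = -(2 * w * ζ) := by
  have hw : (‖w‖ : ℂ) = w := (Complex.eq_norm_of_im_eq_zero_of_re_pos hwreal hwpos).symm
  have hα_ne : α ≠ 0 := by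
    rw [← norm_ne_zero_iff, hαabs, norm_ne_zero_iff]
    exact fun h => by simp [h] at hwpos
  have hα : α = w * ζ ∨ α = -(w * ζ) := by
    simpa only [hαabs, hw] using Complex.eq_norm_mul_or_eq_neg_norm_mul_of_im_div_eq_zero hζ hαreal
  have hβ : β = α :=
    mul_left_cancel₀ hα_ne (by rw [hprod]; rcases hα with h | h <;> rw [h] <;> ring)
  rw [← hsum, hβ]
  rcases hα with h | h <;> rw [h]
  · exact .inl (by ring)
  · exact .inr (by ring)

theorem stmt_13 (lam w ζ α β : ℂ) (hζ : ‖ζ‖ = 1)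
    (hlamreal : (lam / ζ).im = 0)
    (hwreal : w.im = 0) (hwpos : 0 < w.re)
    (hsum : α + β = lam) (hprod : α * β = ζ ^ 2 * w ^ 2)
    (hαabs : ‖α‖ = ‖w‖) (hβabs : ‖β‖ = ‖w‖)
    (hαreal : (α / ζ).im = 0) :
    lam = 2 * w * ζ ∨ lam = -(2 * w * ζ) :=
  stmt_13_general lam w ζ α β hζ hwreal hwpos hsum hprod hαabs hαreal
end

section
/- Let f : ℕ → ℝ be defined by f(ν) = sin((ν+1)θ)/sin(θ) · c(ν) where θ ∈ (0,π) with θ/(2π) irrational and c : ℕ → ℝ is a nonzero periodic sequence. Then f changes sign infinitely often: {ν : f(ν) > 0} and {ν : f(ν) < 0} are both infinite. -/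
/-!
Pick `ν₀` with `c ν₀ ≠ 0` and follow the progression `ν₀ + k t`: there `c` is constant, so
`f (ν₀ + k t)` is a nonzero multiple of `sin ((ν₀ + 1) θ + k t θ)`. Since `t θ / 2π` is irrational,
the multiples of `t θ` are dense in `ℝ / 2πℤ`; in a compact group this makes every point a cluster
point of the forward orbit, so the orbit visits both `{sin > 0}` and `{sin < 0}` infinitely often.
-/

open Filter Set Real Topology

def ChangesSignInfinitelyOften (g : ℕ → ℝ) : Prop :=
  {n | 0 < g n}.Infinite ∧ {n | g n < 0}.Infinite

namespace ChangesSignInfinitelyOften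

variable {g : ℕ → ℝ}

theorem const_mul (h : ChangesSignInfinitelyOften g) {K : ℝ} (hK : K ≠ 0) :
    ChangesSignInfinitelyOften (fun n => K * g n) := by
  rcases hK.lt_or_gt with hK | hK
  · simpa [ChangesSignInfinitelyOften, mul_pos_iff, mul_neg_iff, hK, hK.not_gt] using h.symm
  · simpa [ChangesSignInfinitelyOften, mul_pos_iff, mul_neg_iff, hK, hK.not_gt] using h

theorem of_comp {φ : ℕ → ℕ} (h : ChangesSignInfinitelyOften (g ∘ φ))
    (hφ : φ.Injective) : ChangesSignInfinitelyOften g :=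
  ⟨fun hfin => h.1 (hfin.preimage (f := φ) hφ.injOn),
    fun hfin => h.2 (hfin.preimage (f := φ) hφ.injOn)⟩

end ChangesSignInfinitelyOften

namespace AddCircle

variable {p : ℝ} [Fact (0 < p)] {a : ℝ}

theorem mapClusterPt_atTop_nsmul_of_irrational (ha : Irrational (a / p)) (x : AddCircle p) :
    MapClusterPt x atTop (fun n : ℕ => n • (a : AddCircle p)) :=
  ((mapClusterPt_atTop_nsmul_tfae x (a : AddCircle p)).out 0 3).mpr
    (denseRange_zsmul_coe_iff.mpr ha x)

theorem infinite_setOf_add_nsmul_mem_of_irrational (ha : Irrational (a / p)) (x : AddCircle p)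
    {U : Set (AddCircle p)} (hU : IsOpen U) (hne : U.Nonempty) :
    {n : ℕ | x + n • (a : AddCircle p) ∈ U}.Infinite := by
  obtain ⟨y, hy⟩ := hne
  have hnhds : (x + ·) ⁻¹' U ∈ 𝓝 (y - x) :=
    (continuous_const_add x).continuousAt.preimage_mem_nhds
      (hU.mem_nhds (by simpa only [mem_preimage, add_sub_cancel] using hy))
  exact Nat.frequently_atTop_iff_infinite.mp
    (mapClusterPt_iff_frequently.mp (mapClusterPt_atTop_nsmul_of_irrational ha (y - x)) _ hnhds)

end AddCircle

theorem Real.changesSignInfinitelyOften_sin_add_mul {β : ℝ} (hβ : Irrational (β / (2 * π)))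
    (x : ℝ) : ChangesSignInfinitelyOften (fun n : ℕ => sin (x + n * β)) := by
  have : Fact (0 < 2 * π) := ⟨two_pi_pos⟩
  have key : ∀ {U : Set Real.Angle}, IsOpen U → U.Nonempty →
      {n : ℕ | ((x + n * β : ℝ) : Real.Angle) ∈ U}.Infinite := fun hU hne => by
    simp only [Real.Angle.coe_add, ← nsmul_eq_mul, Real.Angle.coe_nsmul]
    exact AddCircle.infinite_setOf_add_nsmul_mem_of_irrational hβ x hU hne
  constructor
  · simpa only [mem_preimage, mem_Ioi, Real.Angle.sin_coe] using
      key (isOpen_Ioi.preimage Real.Angle.continuous_sin) ⟨(π / 2 : ℝ), by simp⟩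
  · simpa only [mem_preimage, mem_Iio, Real.Angle.sin_coe] using
      key (isOpen_Iio.preimage Real.Angle.continuous_sin) ⟨(-(π / 2) : ℝ), by simp⟩

theorem stmt_17 (θ : ℝ) (hθ : θ ∈ Set.Ioo 0 Real.pi)
    (hirr : Irrational (θ / (2 * Real.pi)))
    (t : ℕ) (ht : 1 ≤ t) (c : ℕ → ℝ) (hc : Function.Periodic c t)
    (hcne : ∃ ν, c ν ≠ 0)
    (f : ℕ → ℝ) (hf : ∀ ν, f ν = Real.sin ((ν + 1) * θ) / Real.sin θ * c ν) :
    {ν : ℕ | 0 < f ν}.Infinite ∧ {ν : ℕ | f ν < 0}.Infinite := by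
  obtain ⟨ν₀, hν₀⟩ := hcne
  have hsin : sin θ ≠ 0 := (sin_pos_of_pos_of_lt_pi hθ.1 hθ.2).ne'
  have hβ : Irrational (t * θ / (2 * π)) := by
    simpa only [mul_div_assoc] using hirr.natCast_mul (by omega : t ≠ 0)
  have hinj : Function.Injective (fun k : ℕ => ν₀ + k * t) := fun a b hab =>
    Nat.eq_of_mul_eq_mul_right ht (Nat.add_left_cancel hab)
  have hprog : f ∘ (fun k : ℕ => ν₀ + k * t) =
      fun k : ℕ => c ν₀ / sin θ * sin ((ν₀ + 1) * θ + k * (t * θ)) := by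
    funext k
    have hper : c (ν₀ + k * t) = c ν₀ := by simpa using hc.nat_mul k ν₀
    rw [Function.comp_apply, hf, hper]
    push_cast
    ring_nf
  have hsign := (changesSignInfinitelyOften_sin_add_mul hβ ((ν₀ + 1) * θ)).const_mul
    (div_ne_zero hν₀ hsin)
  exact ChangesSignInfinitelyOften.of_comp (hprog ▸ hsign) hinj
end

section
/- Suppose a power series Σ_{ν≥0} b(ν) x^ν with real nonneggative coefficients b(ν) ≥ 0 for all but finitely many ν is equal, on its disc of convergence, to a rational function R(x) = P(x)/((1−αx)(1−βx)) with P a polynomial and α, β nonreal complex conjugates with |α| = |β| = r > 0, P(1/α) ≠ 0. Then a contradiction arises: such a series must, by Landau's theorem, have a singularity at the real point of its circle of convergence, but R has no real singularity of modulus 1/r. -/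
/-!
Partial fractions together with the uniqueness of power series coefficients give
`b ν = A α ^ ν + B β ^ ν` for all large `ν`, where `A (1 - β / α) = P (1 / α) ≠ 0`.
After dividing by `r ^ ν`, the partial sums of the eventually nonnegative sequence `b ν / r ^ ν`
are bounded, being combinations of geometric sums with ratios `α / r ≠ 1` and `β / r ≠ 1` on the
unit circle. Hence `b ν / r ^ ν → 0`, and eliminating the `β`-term between consecutive terms
forces `A = 0`.
-/

open Filter Topology Polynomial

theorem Polynomial.hasSum_coeff_mul_pow {R : Type*} [CommSemiring R] [TopologicalSpace R]
    (p : R[X]) (x : R) : HasSum (fun n => p.coeff n * x ^ n) (p.eval x) := by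
  rw [eval_eq_sum, Polynomial.sum_def]
  exact hasSum_sum_of_ne_finset_zero fun n hn => by simp [notMem_support_iff.mp hn]

theorem eq_of_eventually_hasSum_mul_pow {𝕜 : Type*} [NontriviallyNormedField 𝕜]
    {c c' : ℕ → 𝕜} {f : 𝕜 → 𝕜}
    (h : ∀ᶠ x in 𝓝 0, HasSum (fun n => c n * x ^ n) (f x))
    (h' : ∀ᶠ x in 𝓝 0, HasSum (fun n => c' n * x ^ n) (f x)) : c = c' := by
  have hfps {c : ℕ → 𝕜} (h : ∀ᶠ x in 𝓝 0, HasSum (fun n => c n * x ^ n) (f x)) :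
      HasFPowerSeriesAt f (FormalMultilinearSeries.ofScalars 𝕜 c) 0 :=
    hasFPowerSeriesAt_iff.mpr <| by simpa only [zero_add, FormalMultilinearSeries.coeff_ofScalars,
      smul_eq_mul, mul_comm] using h
  exact FormalMultilinearSeries.ofScalars_series_injective (𝕜 := 𝕜) 𝕜
    ((hfps h).eq_formalMultilinearSeries (hfps h'))

theorem Polynomial.exists_eval_eq_partialFraction {K : Type*} [Field K] (P : K[X]) {α β A B : K}
    (hα : α ≠ 0) (hβ : β ≠ 0) (hαβ : α ≠ β)
    (hA : P.eval α⁻¹ = A * (1 - β * α⁻¹)) (hB : P.eval β⁻¹ = B * (1 - α * β⁻¹)) :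
    ∃ Q : K[X], ∀ x, P.eval x = (1 - α * x) * (1 - β * x) * Q.eval x
      + A * (1 - β * x) + B * (1 - α * x) := by
  set P₀ := P - C A * (1 - C β * X) - C B * (1 - C α * X)
  have hα' : X - C α⁻¹ ∣ P₀ := dvd_iff_isRoot.mpr (by simp [P₀, hA, hα])
  have hβ' : X - C β⁻¹ ∣ P₀ := dvd_iff_isRoot.mpr (by simp [P₀, hB, hβ])
  have hcop : IsCoprime (X - C α⁻¹) (X - C β⁻¹) :=
    isCoprime_X_sub_C_of_isUnit_sub (sub_ne_zero.mpr (inv_injective.ne hαβ)).isUnit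
  obtain ⟨R, hR⟩ := hcop.mul_dvd hα' hβ'
  refine ⟨C (α * β)⁻¹ * R, fun x => ?_⟩
  have hx := congrArg (eval x) hR
  simp only [P₀, eval_sub, eval_mul, eval_C, eval_X, eval_one] at hx ⊢
  field_simp at hx ⊢
  linear_combination hx

theorem norm_geom_sum_le_two_div {𝕜 : Type*} [NormedField 𝕜] {ζ : 𝕜} (hζ : ‖ζ‖ ≤ 1) (hζ1 : ζ ≠ 1)
    (n : ℕ) : ‖∑ k ∈ Finset.range n, ζ ^ k‖ ≤ 2 / ‖ζ - 1‖ := by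
  rw [geom_sum_eq hζ1, norm_div]
  gcongr
  calc ‖ζ ^ n - 1‖ ≤ ‖ζ‖ ^ n + ‖(1 : 𝕜)‖ := by simpa using norm_sub_le (ζ ^ n) 1
    _ ≤ 2 := by norm_num; linarith [pow_le_one₀ (norm_nonneg ζ) hζ (n := n)]

theorem eventually_coeff_eq_of_hasSum_div {𝕜 : Type*} [NontriviallyNormedField 𝕜]
    [CompleteSpace 𝕜] {c : ℕ → 𝕜} {P : 𝕜[X]} {α β : 𝕜} (hα : α ≠ 0) (hβ : β ≠ 0) (hαβ : α ≠ β)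
    (h : ∀ᶠ x in 𝓝 0, HasSum (fun n => c n * x ^ n) (P.eval x / ((1 - α * x) * (1 - β * x)))) :
    ∃ A B : 𝕜, P.eval α⁻¹ = A * (1 - β * α⁻¹) ∧ ∀ᶠ n in atTop, c n = A * α ^ n + B * β ^ n := by
  set A := P.eval α⁻¹ / (1 - β * α⁻¹)
  set B := P.eval β⁻¹ / (1 - α * β⁻¹)
  have hA : P.eval α⁻¹ = A * (1 - β * α⁻¹) :=
    (div_mul_cancel₀ _ (sub_ne_zero.mpr fun h => hαβ ((mul_inv_eq_one₀ hα).mp h.symm).symm)).symm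
  have hB : P.eval β⁻¹ = B * (1 - α * β⁻¹) :=
    (div_mul_cancel₀ _ (sub_ne_zero.mpr fun h => hαβ ((mul_inv_eq_one₀ hβ).mp h.symm))).symm
  obtain ⟨Q, hQ⟩ := P.exists_eval_eq_partialFraction hα hβ hαβ hA hB
  have hsmall (γ : 𝕜) : ∀ᶠ x in 𝓝 (0 : 𝕜), ‖γ * x‖ < 1 :=
    (continuous_const_mul γ).norm.continuousAt.eventually_lt continuousAt_const (by simp)
  have hexpand : ∀ᶠ x in 𝓝 0, HasSum (fun n => (Q.coeff n + A * α ^ n + B * β ^ n) * x ^ n)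
      (P.eval x / ((1 - α * x) * (1 - β * x))) := by
    filter_upwards [hsmall α, hsmall β] with x hαx hβx
    have hα1 : 1 - α * x ≠ 0 := sub_ne_zero.mpr fun h => by simp [← h] at hαx
    have hβ1 : 1 - β * x ≠ 0 := sub_ne_zero.mpr fun h => by simp [← h] at hβx
    convert ((Q.hasSum_coeff_mul_pow x).add
      ((hasSum_geometric_of_norm_lt_one hαx).mul_left A)).add
      ((hasSum_geometric_of_norm_lt_one hβx).mul_left B) using 1
    · funext n; ring
    · rw [hQ x, eq_comm, eq_div_iff (mul_ne_zero hα1 hβ1)]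
      linear_combination
        (A * (1 - β * x)) * mul_inv_cancel₀ hα1 + (B * (1 - α * x)) * mul_inv_cancel₀ hβ1
  refine ⟨A, B, hA, ?_⟩
  filter_upwards [eventually_gt_atTop Q.natDegree] with n hn
  simp [eq_of_eventually_hasSum_mul_pow h hexpand, coeff_eq_zero_of_natDegree_lt hn]

theorem eq_zero_of_nonneg_of_eq_mul_pow_add_mul_pow {t : ℕ → ℝ} {ζ η A B : ℂ}
    (hζ : ‖ζ‖ = 1) (hη : ‖η‖ = 1) (hζ1 : ζ ≠ 1) (hη1 : η ≠ 1) (hζη : ζ ≠ η)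
    (ht : ∀ k, 0 ≤ t k) (htAB : ∀ k, (t k : ℂ) = A * ζ ^ k + B * η ^ k) : A = 0 := by
  have hbdd (n : ℕ) : ∑ k ∈ Finset.range n, t k ≤ ‖A‖ * (2 / ‖ζ - 1‖) + ‖B‖ * (2 / ‖η - 1‖) :=
    calc ∑ k ∈ Finset.range n, t k
        = ‖A * ∑ k ∈ Finset.range n, ζ ^ k + B * ∑ k ∈ Finset.range n, η ^ k‖ := by
          rw [Finset.mul_sum, Finset.mul_sum, ← Finset.sum_add_distrib]
          simp_rw [← htAB]
          rw [← Complex.ofReal_sum, Complex.norm_real,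
            Real.norm_of_nonneg (Finset.sum_nonneg fun k _ => ht k)]
      _ ≤ ‖A‖ * (2 / ‖ζ - 1‖) + ‖B‖ * (2 / ‖η - 1‖) := by
          refine (norm_add_le _ _).trans ?_
          rw [norm_mul, norm_mul]
          gcongr
          exacts [norm_geom_sum_le_two_div hζ.le hζ1 n, norm_geom_sum_le_two_div hη.le hη1 n]
  have hlim : Tendsto (fun k => A * ζ ^ k + B * η ^ k) atTop (𝓝 0) := by
    simpa [Function.comp_def, ← htAB] using (Complex.continuous_ofReal.tendsto 0).comp
      (summable_of_sum_range_le ht hbdd).tendsto_atTop_zero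
  have hlim' : Tendsto (fun k => A * (η - ζ) * ζ ^ k) atTop (𝓝 0) := by
    convert (hlim.const_mul η).sub ((tendsto_add_atTop_iff_nat 1).mpr hlim) using 1
    · funext k; ring
    · simp
  have hconst : ‖A * (η - ζ)‖ = 0 := by
    refine tendsto_nhds_unique ?_ (by simpa using hlim'.norm)
    simp [hζ]
  simpa [sub_eq_zero, hζη.symm] using hconst

theorem eq_zero_of_eventually_nonneg_of_eq_mul_pow_add_mul_pow {b : ℕ → ℝ} {r : ℝ} {α β A B : ℂ}
    (hr : 0 < r) (hα : ‖α‖ = r) (hβ : ‖β‖ = r) (hαr : α ≠ r) (hβr : β ≠ r) (hαβ : α ≠ β)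
    (hb : ∀ᶠ n in atTop, 0 ≤ b n) (hbAB : ∀ᶠ n in atTop, (b n : ℂ) = A * α ^ n + B * β ^ n) :
    A = 0 := by
  obtain ⟨N, hN⟩ := eventually_atTop.mp (hb.and hbAB)
  have hr0 : (r : ℂ) ≠ 0 := by exact_mod_cast hr.ne'
  have hunit {γ : ℂ} (hγ : ‖γ‖ = r) : ‖γ / r‖ = 1 := by
    rw [norm_div, hγ, Complex.norm_real, Real.norm_of_nonneg hr.le, div_self hr.ne']
  have hne1 {γ : ℂ} (hγ : γ ≠ r) : γ / r ≠ 1 := by rwa [ne_eq, div_eq_one_iff_eq hr0]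
  have hAN := eq_zero_of_nonneg_of_eq_mul_pow_add_mul_pow (t := fun k => b (N + k) / r ^ (N + k))
    (A := A * (α / r) ^ N) (B := B * (β / r) ^ N) (hunit hα) (hunit hβ) (hne1 hαr) (hne1 hβr)
    (by rwa [ne_eq, div_left_inj' hr0])
    (fun k => div_nonneg (hN _ le_self_add).1 (pow_nonneg hr.le _))
    (fun k => by push_cast; rw [(hN _ le_self_add).2]; ring)
  simpa [hr.ne', norm_pos_iff.mp (hα ▸ hr)] using hAN

theorem stmt_18 (b : ℕ → ℝ) (hb : ∀ᶠ ν in Filter.atTop, 0 ≤ b ν)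
    (P : Polynomial ℂ) (α β : ℂ) (hconj : β = starRingEnd ℂ α)
    (hnonreal : α.im ≠ 0) (r : ℝ) (hr : r = ‖α‖) (hrpos : 0 < r)
    (hβabs : ‖β‖ = r)
    (hPα : P.eval (1 / α) ≠ 0)
    (hsum : ∀ x : ℂ, ‖x‖ < 1 / r →
      HasSum (fun ν : ℕ => (b ν : ℂ) * x ^ ν)
        (P.eval x / ((1 - α * x) * (1 - β * x)))) :
    False := by
  have hα0 : α ≠ 0 := norm_pos_iff.mp (hr ▸ hrpos)
  have hβ0 : β ≠ 0 := norm_pos_iff.mp (hβabs ▸ hrpos)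
  have hαβ : α ≠ β := fun h => hnonreal (Complex.conj_eq_iff_im.mp (h.trans hconj).symm)
  have hαr : α ≠ r := fun h => hnonreal (by simp [h])
  have hβr : β ≠ r := fun h => hnonreal (by simpa [hconj] using congrArg Complex.im h)
  have hsum0 : ∀ᶠ x in 𝓝 0, HasSum (fun ν => (b ν : ℂ) * x ^ ν)
      (P.eval x / ((1 - α * x) * (1 - β * x))) :=
    eventually_of_mem (Metric.ball_mem_nhds 0 (by positivity)) fun x hx =>
      hsum x (mem_ball_zero_iff.mp hx)
  obtain ⟨A, B, hPA, hbAB⟩ := eventually_coeff_eq_of_hasSum_div hα0 hβ0 hαβ hsum0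
  have hA : A = 0 := eq_zero_of_eventually_nonneg_of_eq_mul_pow_add_mul_pow hrpos hr.symm hβabs
    hαr hβr hαβ hb hbAB
  exact hPα (by rw [one_div, hPA, hA, zero_mul])
end
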